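/- Let f, g ∈ P₂(ℝ) have continuous, strictly positive probability density functions, with F the CDF of f (with inverse F^{-1}), G the CDF of g, and G^{-1} the quantile function of g. Set T = G^{-1} ∘ F. Let f = Σ_{k=1}^K π_k f_k be a mixture decomposition with weights π_k ≥ 0 summing to one and continuous component densities f_k. Then, for each k, the pushforward of the measure with density f_k under the map T has density g_k(x) = g(x) · f_k(F^{-1}(G(x))) / Σ_{l=1}^K π_l f_l(F^{-1}(G(x))), each g_k is a probability density, and Σ_{k=1}^K π_k g_k = g. -/

import Mathlib

open MeasureTheory ProbabilityTheory ENNReal Filter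

/-- Squared 2-Wasserstein distance between two measures on `ℝ`, defined as the infimum of
`∫ (x - y)^2 dγ` over all coupling probability measures `γ` with the given marginals. -/
noncomputable def W2sq (μ ν : MeasureTheory.Measure ℝ) : ℝ≥0∞ :=
  ⨅ (γ : MeasureTheory.Measure (ℝ × ℝ)) (_ : MeasureTheory.IsProbabilityMeasure γ)
    (_ : γ.map Prod.fst = μ) (_ : γ.map Prod.snd = ν),
    ∫⁻ p, ENNReal.ofReal ((p.1 - p.2) ^ 2) ∂γ

/-- The 2-Wasserstein distance `W₂`. -/
noncomputable def W2 (μ ν : MeasureTheory.Measure ℝ) : ℝ :=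
  Real.sqrt (W2sq μ ν).toReal

/-- `μ ∈ P₂(ℝ)`: a Borel probability measure on `ℝ` with finite second moment. -/
def MemP2 (μ : MeasureTheory.Measure ℝ) : Prop :=
  MeasureTheory.IsProbabilityMeasure μ ∧ (∫⁻ x, ENNReal.ofReal (x ^ 2) ∂μ) < ⊤

/-
`T = G⁻¹ ∘ F` is a strictly increasing bijection of `ℝ` whose inverse `S = F⁻¹ ∘ G` satisfies
`F ∘ S = G`, so `S' = g / f ∘ S`. The change of variables `x = S y` turns the pushforward of
`f_k` under `T` into the density `f_k(S y) · g(y) / f(S y)`, and `f = Σ_l π_l f_l` holds pointwise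
because both sides are continuous densities of the same measure. Summing against `π_k` gives `g`.
-/

open Set Function Topology

lemma integrable_of_isProbabilityMeasure_withDensity_ofReal {d : ℝ → ℝ} (hd : Continuous d)
    (hd0 : ∀ x, 0 ≤ d x) [IsProbabilityMeasure (volume.withDensity fun x => ENNReal.ofReal (d x))] :
    Integrable d := by
  refine ⟨hd.aestronglyMeasurable, ?_⟩
  rw [hasFiniteIntegral_iff_ofReal (.of_forall hd0), ← setLIntegral_univ,
    ← withDensity_apply _ MeasurableSet.univ, measure_univ]
  exact one_lt_top

lemma cdf_withDensity_ofReal {d : ℝ → ℝ} (hd : Continuous d) (hd0 : ∀ x, 0 ≤ d x)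
    [IsProbabilityMeasure (volume.withDensity fun x => ENNReal.ofReal (d x))] (x : ℝ) :
    cdf (volume.withDensity fun x => ENNReal.ofReal (d x)) x = ∫ y in Iic x, d y := by
  rw [cdf_eq_real, measureReal_def, withDensity_apply _ measurableSet_Iic,
    integral_eq_lintegral_of_nonneg_ae (.of_forall hd0) hd.aestronglyMeasurable.restrict]

lemma hasDerivAt_cdf_withDensity_ofReal {d : ℝ → ℝ} (hd : Continuous d) (hd0 : ∀ x, 0 ≤ d x)
    [IsProbabilityMeasure (volume.withDensity fun x => ENNReal.ofReal (d x))] (x : ℝ) :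
    HasDerivAt (cdf (volume.withDensity fun x => ENNReal.ofReal (d x))) (d x) x := by
  have hint := integrable_of_isProbabilityMeasure_withDensity_ofReal hd hd0
  have hcdf : cdf (volume.withDensity fun x => ENNReal.ofReal (d x)) = fun y =>
      cdf (volume.withDensity fun x => ENNReal.ofReal (d x)) 0 + ∫ t in (0 : ℝ)..y, d t := by
    funext y
    rw [cdf_withDensity_ofReal hd hd0, cdf_withDensity_ofReal hd hd0,
      ← intervalIntegral.integral_Iic_sub_Iic hint.integrableOn hint.integrableOn]
    ring
  rw [hcdf]
  exact (intervalIntegral.integral_hasDerivAt_right (hd.intervalIntegrable 0 x)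
    (hd.stronglyMeasurableAtFilter _ _) hd.continuousAt).const_add _

lemma cdf_mem_Ioo_of_strictMono {μ : Measure ℝ} (h : StrictMono (cdf μ)) (x : ℝ) :
    cdf μ x ∈ Ioo 0 1 :=
  ⟨(cdf_nonneg μ (x - 1)).trans_lt (h (sub_one_lt x)),
    (h (lt_add_one x)).trans_le (cdf_le_one μ (x + 1))⟩

lemma continuousAt_of_leftInverse_of_rightInvOn {F Q : ℝ → ℝ} {U : Set ℝ} {s : ℝ}
    (hF : StrictMono F) (hQF : LeftInverse Q F) (hFQ : RightInvOn Q F U) (hFU : ∀ x, F x ∈ U)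
    (hs : U ∈ 𝓝 s) : ContinuousAt Q s := by
  refine continuousAt_of_monotoneOn_of_image_mem_nhds (fun a ha b hb hab => ?_) hs ?_
  · rwa [← hF.le_iff_le, hFQ ha, hFQ hb]
  · exact univ_mem' fun x => ⟨F x, hFU x, hQF x⟩

lemma hasDerivAt_of_leftInverse_of_rightInvOn {F Q F' : ℝ → ℝ} {U : Set ℝ} {s : ℝ}
    (hF : ∀ x, HasDerivAt F (F' x) x) (hF' : ∀ x, 0 < F' x) (hQF : LeftInverse Q F)
    (hFQ : RightInvOn Q F U) (hFU : ∀ x, F x ∈ U) (hs : U ∈ 𝓝 s) :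
    HasDerivAt Q (F' (Q s))⁻¹ s :=
  (hF (Q s)).of_local_left_inverse
    (continuousAt_of_leftInverse_of_rightInvOn (strictMono_of_hasDerivAt_pos hF hF') hQF hFQ hFU hs)
    (hF' _).ne' (mem_of_superset hs fun _ ht => hFQ ht)

lemma StrictMono.monotone_of_leftInverse {α β : Type*} [LinearOrder α] [Preorder β]
    {S : α → β} {T : β → α} (hS : StrictMono S) (hST : LeftInverse S T) : Monotone T :=
  fun a b hab => by rwa [← hS.le_iff_le, hST a, hST b]

lemma map_withDensity_eq_of_leftInverse {S T S' : ℝ → ℝ} (hS : StrictMono S)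
    (hST : LeftInverse S T) (hS' : ∀ x, HasDerivAt S (S' x) x) (ρ : ℝ → ℝ≥0∞) :
    (volume.withDensity ρ).map T = volume.withDensity fun x => ENNReal.ofReal |S' x| * ρ (S x) := by
  have hT : Measurable T := (hS.monotone_of_leftInverse hST).measurable
  have hpre : preimage T = image S :=
    (image_eq_preimage_of_inverse (hST.rightInverse_of_injective hS.injective) hST).symm
  ext A hA
  rw [Measure.map_apply hT hA, withDensity_apply _ (hT hA), withDensity_apply _ hA, hpre,
    lintegral_image_eq_lintegral_abs_deriv_mul hA (fun x _ => (hS' x).hasDerivWithinAt)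
      hS.injective.injOn]

lemma sum_smul_withDensity_ofReal {X ι : Type*} [MeasurableSpace X] [Fintype ι] (μ : Measure X)
    {w : ι → ℝ} (hw : ∀ i, 0 ≤ w i) {d : ι → X → ℝ} (hd : ∀ i, Measurable (d i))
    (hd0 : ∀ i x, 0 ≤ d i x) :
    ∑ i, ENNReal.ofReal (w i) • μ.withDensity (fun x => ENNReal.ofReal (d i x))
      = μ.withDensity fun x => ENNReal.ofReal (∑ i, w i * d i x) := by
  have hmeas : ∀ i, Measurable fun x => ENNReal.ofReal (w i) * ENNReal.ofReal (d i x) :=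
    fun i => measurable_const.mul (hd i).ennreal_ofReal
  calc ∑ i, ENNReal.ofReal (w i) • μ.withDensity (fun x => ENNReal.ofReal (d i x))
      = Measure.sum fun i =>
          μ.withDensity fun x => ENNReal.ofReal (w i) * ENNReal.ofReal (d i x) := by
        rw [Measure.sum_fintype]
        exact Finset.sum_congr rfl fun i _ => (withDensity_smul _ (hd i).ennreal_ofReal).symm
    _ = μ.withDensity fun x => ENNReal.ofReal (∑ i, w i * d i x) := by
        rw [← withDensity_tsum hmeas]
        congr 1
        funext x
        rw [tsum_fintype, Finset.sum_apply, ENNReal.ofReal_sum_of_nonneg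
          fun i _ => mul_nonneg (hw i) (hd0 i x)]
        exact Finset.sum_congr rfl fun i _ => (ENNReal.ofReal_mul (hw i)).symm

lemma eq_of_withDensity_ofReal_eq {X : Type*} [TopologicalSpace X] [MeasurableSpace X]
    [OpensMeasurableSpace X] {μ : Measure X} [μ.IsOpenPosMeasure] [SigmaFinite μ] {d d' : X → ℝ}
    (hd : Continuous d) (hd' : Continuous d') (hd0 : ∀ x, 0 ≤ d x) (hd0' : ∀ x, 0 ≤ d' x)
    (h : μ.withDensity (fun x => ENNReal.ofReal (d x))
      = μ.withDensity fun x => ENNReal.ofReal (d' x)) :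
    d = d' := by
  have hc : ∀ {e : X → ℝ}, Continuous e → Continuous fun x => ENNReal.ofReal (e x) :=
    fun he => ENNReal.continuous_ofReal.comp he
  have hae := (withDensity_eq_iff_of_sigmaFinite (hc hd).measurable.aemeasurable
    (hc hd').measurable.aemeasurable).mp h
  have heq := (Continuous.ae_eq_iff_eq μ (hc hd) (hc hd')).mp hae
  funext x
  exact (ENNReal.ofReal_eq_ofReal_iff (hd0 x) (hd0' x)).mp (congrFun heq x)

lemma sum_mul_mul_div_sum_eq {ι 𝕜 : Type*} [Field 𝕜] (s : Finset ι) (w b : ι → 𝕜) (a : 𝕜)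
    (h : ∑ i ∈ s, w i * b i ≠ 0) : ∑ i ∈ s, w i * (a * b i / ∑ j ∈ s, w j * b j) = a := by
  simp_rw [mul_div_assoc', ← Finset.sum_div, mul_left_comm _ a, ← Finset.mul_sum]
  exact mul_div_cancel_right₀ a h

theorem pushforward_mixture_components_general
    (K : ℕ) (w : Fin K → ℝ) (hw : ∀ k, 0 ≤ w k)
    (f g : Measure ℝ) (hf : MemP2 f) (hg : MemP2 g)
    (df dg : ℝ → ℝ) (hdfc : Continuous df) (hdgc : Continuous dg)
    (hdfpos : ∀ x, 0 < df x) (hdgpos : ∀ x, 0 < dg x)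
    (hfd : f = MeasureTheory.volume.withDensity (fun x => ENNReal.ofReal (df x)))
    (hgd : g = MeasureTheory.volume.withDensity (fun x => ENNReal.ofReal (dg x)))
    -- F⁻¹ : the inverse of the CDF F of f; G⁻¹ : the quantile function of g
    (Finv Ginv : ℝ → ℝ)
    (hFinv : ∀ x : ℝ, Finv (ProbabilityTheory.cdf f x) = x)
    (hFinv' : ∀ s ∈ Set.Ioo (0 : ℝ) 1, ProbabilityTheory.cdf f (Finv s) = s)
    (hGinv' : ∀ s ∈ Set.Ioo (0 : ℝ) 1, ProbabilityTheory.cdf g (Ginv s) = s)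
    -- the mixture decomposition f = Σ π_k f_k with continuous component densities
    (dfk : Fin K → ℝ → ℝ) (hdfkc : ∀ k, Continuous (dfk k)) (hdfknn : ∀ k x, 0 ≤ dfk k x)
    (hfkprob : ∀ k, IsProbabilityMeasure
      (MeasureTheory.volume.withDensity fun x => ENNReal.ofReal (dfk k x)))
    (hfdec : f = ∑ k, ENNReal.ofReal (w k) •
      MeasureTheory.volume.withDensity fun x => ENNReal.ofReal (dfk k x)) :
    (fun (gk : Fin K → ℝ → ℝ) =>
      (∀ k, Measure.map (Ginv ∘ fun x => ProbabilityTheory.cdf f x)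
          (MeasureTheory.volume.withDensity fun x => ENNReal.ofReal (dfk k x))
        = MeasureTheory.volume.withDensity fun x => ENNReal.ofReal (gk k x)) ∧
      (∀ k, IsProbabilityMeasure
        (MeasureTheory.volume.withDensity fun x => ENNReal.ofReal (gk k x))) ∧
      (∀ x, ∑ k, w k * gk k x = dg x))
      (fun k x => dg x * dfk k (Finv (ProbabilityTheory.cdf g x)) /
        ∑ l, w l * dfk l (Finv (ProbabilityTheory.cdf g x))) := by
  have hmix : ∀ x, ∑ l, w l * dfk l x = df x := congrFun <| eq_of_withDensity_ofReal_eq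
    (by fun_prop) hdfc (fun x => Finset.sum_nonneg fun l _ => mul_nonneg (hw l) (hdfknn l x))
    (fun x => (hdfpos x).le)
    ((sum_smul_withDensity_ofReal _ hw (fun k => (hdfkc k).measurable) hdfknn).symm.trans
      (hfdec.symm.trans hfd))
  obtain ⟨hfprob, -⟩ := hf
  obtain ⟨hgprob, -⟩ := hg
  subst hfd hgd
  set F := cdf (volume.withDensity fun x => ENNReal.ofReal (df x))
  set G := cdf (volume.withDensity fun x => ENNReal.ofReal (dg x))
  have hF : ∀ x, HasDerivAt F (df x) x := hasDerivAt_cdf_withDensity_ofReal hdfc (hdfpos · |>.le)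
  have hG : ∀ x, HasDerivAt G (dg x) x := hasDerivAt_cdf_withDensity_ofReal hdgc (hdgpos · |>.le)
  have hF01 := cdf_mem_Ioo_of_strictMono (strictMono_of_hasDerivAt_pos hF hdfpos)
  have hG01 := cdf_mem_Ioo_of_strictMono (strictMono_of_hasDerivAt_pos hG hdgpos)
  have hST : LeftInverse (Finv ∘ G) (Ginv ∘ F) := fun y =>
    (congrArg Finv (hGinv' _ (hF01 y))).trans (hFinv y)
  have hS (x : ℝ) : HasDerivAt (Finv ∘ G) ((df (Finv (G x)))⁻¹ * dg x) x :=
    (hasDerivAt_of_leftInverse_of_rightInvOn hF hdfpos hFinv hFinv' hF01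
      (Ioo_mem_nhds (hG01 x).1 (hG01 x).2)).comp x (hG x)
  have hSmono : StrictMono (Finv ∘ G) :=
    strictMono_of_hasDerivAt_pos hS fun x => mul_pos (inv_pos.2 (hdfpos _)) (hdgpos x)
  have hmap (k : Fin K) : (volume.withDensity fun x => ENNReal.ofReal (dfk k x)).map (Ginv ∘ F)
      = volume.withDensity fun x => ENNReal.ofReal
          (dg x * dfk k (Finv (G x)) / ∑ l, w l * dfk l (Finv (G x))) := by
    rw [map_withDensity_eq_of_leftInverse hSmono hST hS]
    congr with x
    have hS'pos : 0 < (df (Finv (G x)))⁻¹ * dg x := mul_pos (inv_pos.2 (hdfpos _)) (hdgpos x)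
    rw [abs_of_pos hS'pos, ← ENNReal.ofReal_mul hS'pos.le, hmix, comp_apply]
    field_simp
  refine ⟨hmap, fun k => ?_, fun x => sum_mul_mul_div_sum_eq _ _ _ _ ?_⟩
  · have := hfkprob k
    rw [← hmap k]
    exact Measure.isProbabilityMeasure_map
      (hSmono.monotone_of_leftInverse hST).measurable.aemeasurable
  · exact (hmix _).trans_ne (hdfpos _).ne'

/-- The pushforward of each mixture component f_k under the optimal transport map
T = G⁻¹ ∘ F has density g_k(x) = g(x) · f_k(F⁻¹(G(x))) / Σ_l π_l f_l(F⁻¹(G(x)));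
each g_k is a probability density, and Σ_k π_k g_k = g. -/
theorem pushforward_mixture_components
    (K : ℕ) (hK : 0 < K) (w : Fin K → ℝ) (hw : ∀ k, 0 ≤ w k) (hsum : ∑ k, w k = 1)
    (f g : Measure ℝ) (hf : MemP2 f) (hg : MemP2 g)
    (df dg : ℝ → ℝ) (hdfc : Continuous df) (hdgc : Continuous dg)
    (hdfpos : ∀ x, 0 < df x) (hdgpos : ∀ x, 0 < dg x)
    (hfd : f = MeasureTheory.volume.withDensity (fun x => ENNReal.ofReal (df x)))
    (hgd : g = MeasureTheory.volume.withDensity (fun x => ENNReal.ofReal (dg x)))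
    -- F⁻¹ : the inverse of the CDF F of f; G⁻¹ : the quantile function of g
    (Finv Ginv : ℝ → ℝ)
    (hFinv : ∀ x : ℝ, Finv (ProbabilityTheory.cdf f x) = x)
    (hFinv' : ∀ s ∈ Set.Ioo (0 : ℝ) 1, ProbabilityTheory.cdf f (Finv s) = s)
    (hGinv : ∀ x : ℝ, Ginv (ProbabilityTheory.cdf g x) = x)
    (hGinv' : ∀ s ∈ Set.Ioo (0 : ℝ) 1, ProbabilityTheory.cdf g (Ginv s) = s)
    -- the mixture decomposition f = Σ π_k f_k with continuous component densities
    (dfk : Fin K → ℝ → ℝ) (hdfkc : ∀ k, Continuous (dfk k)) (hdfknn : ∀ k x, 0 ≤ dfk k x)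
    (hfkprob : ∀ k, IsProbabilityMeasure
      (MeasureTheory.volume.withDensity fun x => ENNReal.ofReal (dfk k x)))
    (hfdec : f = ∑ k, ENNReal.ofReal (w k) •
      MeasureTheory.volume.withDensity fun x => ENNReal.ofReal (dfk k x)) :
    (fun (gk : Fin K → ℝ → ℝ) =>
      (∀ k, Measure.map (Ginv ∘ fun x => ProbabilityTheory.cdf f x)
          (MeasureTheory.volume.withDensity fun x => ENNReal.ofReal (dfk k x))
        = MeasureTheory.volume.withDensity fun x => ENNReal.ofReal (gk k x)) ∧
      (∀ k, IsProbabilityMeasure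
        (MeasureTheory.volume.withDensity fun x => ENNReal.ofReal (gk k x))) ∧
      (∀ x, ∑ k, w k * gk k x = dg x))
      (fun k x => dg x * dfk k (Finv (ProbabilityTheory.cdf g x)) /
        ∑ l, w l * dfk l (Finv (ProbabilityTheory.cdf g x))) :=
  pushforward_mixture_components_general K w hw f g hf hg df dg hdfc hdgc hdfpos hdgpos hfd hgd Finv
    Ginv hFinv hFinv' hGinv' dfk hdfkc hdfknn hfkprob hfdec
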